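/- arXiv:1512.07714 — 6 statements merged into one kernel-verified Lean document; each statement's English description precedes it below -/
import Mathlib

section
/- Let A, B be C*-algebras, r > 0, and H : B_A(0;r) → B a holomorphic map with Taylor expansion H = ∑_{n≥0} P_n at 0. If H is orthogonally additive on B_A(0;r) (i.e., H(a+b) = H(a) + H(b) whenever a, b ∈ B_A(0;r), a+b ∈ B_A(0;r), and ab = ba = 0), then each homogeneous polynomial P_n is orthogonally additive on A, and P_0 = 0. -/
/-!
Restricting `H` to the complex line through `x` gives a one-variable power series whose `n`-th
coefficient is `Pₙ(x)`. For orthogonal `a`, `b` the line restrictions satisfy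
`H(t(a + b)) = H(ta) + H(tb)` for small `t`, since `ta` and `tb` are still orthogonal, so by
uniqueness of one-variable power series `Pₙ(a + b) = Pₙ(a) + Pₙ(b)`. Finally
`P₀ = H(0) = 0` because `0` is orthogonal to itself.
-/

open Filter Topology ContinuousLinearMap

section LineRestriction

variable {𝕜 E F : Type*} [NontriviallyNormedField 𝕜] [NormedAddCommGroup E] [NormedSpace 𝕜 E]
  [NormedAddCommGroup F] [NormedSpace 𝕜 F] {f : E → F} {p : FormalMultilinearSeries 𝕜 E F}

theorem HasFPowerSeriesAt.comp_smul_right (hf : HasFPowerSeriesAt f p 0) (x : E) :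
    HasFPowerSeriesAt (fun t : 𝕜 => f (t • x))
      (p.compContinuousLinearMap (toSpanSingleton 𝕜 x)) 0 :=
  (show HasFPowerSeriesAt f p (toSpanSingleton 𝕜 x 0) by simpa using hf).compContinuousLinearMap

theorem HasFPowerSeriesAt.apply_add_of_eventually_smul (hf : HasFPowerSeriesAt f p 0) {a b : E}
    (hadd : ∀ᶠ t : 𝕜 in 𝓝 0, f (t • (a + b)) = f (t • a) + f (t • b)) (n : ℕ) :
    (p n fun _ => a + b) = (p n fun _ => a) + (p n fun _ => b) := by
  have hseries := (hf.comp_smul_right (a + b)).eq_formalMultilinearSeries_of_eventually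
    ((hf.comp_smul_right a).add (hf.comp_smul_right b)) hadd
  simpa only [FormalMultilinearSeries.add_apply, add_apply, Function.comp_def,
    FormalMultilinearSeries.compContinuousLinearMap_apply, toSpanSingleton_apply, one_smul] using
    congrArg (fun q : FormalMultilinearSeries 𝕜 𝕜 F => q n fun _ => 1) hseries

theorem eventually_norm_smul_lt (x : E) {r : ℝ} (hr : 0 < r) :
    ∀ᶠ t : 𝕜 in 𝓝 0, ‖t • x‖ < r :=
  ((continuous_id.smul continuous_const).norm.tendsto' (0 : 𝕜) 0 (by simp)).eventually
    (gt_mem_nhds hr)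

end LineRestriction

/-- if the holomorphic map `H = ∑ₙ Pₙ` on `B_A(0;r)` is orthogonally
additive, then each Taylor coefficient `Pₙ(x) = pₙ(x,…,x)` is orthogonally additive
on `A`, and the constant term `P₀` vanishes. -/
theorem stmt_2 {A B : Type*} [NonUnitalCStarAlgebra A] [NonUnitalCStarAlgebra B]
    {r : ℝ} (hr : 0 < r) (H : A → B) (p : FormalMultilinearSeries ℂ A B)
    (hH : HasFPowerSeriesOnBall H p 0 (ENNReal.ofReal r))
    (horth : ∀ a b : A, ‖a‖ < r → ‖b‖ < r → ‖a + b‖ < r →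
      a * b = 0 → b * a = 0 → H (a + b) = H a + H b) :
    (∀ (n : ℕ) (a b : A), a * b = 0 → b * a = 0 →
        (p n fun _ => a + b) = (p n fun _ => a) + (p n fun _ => b)) ∧
      ∀ x : A, (p 0 fun _ => x) = 0 := by
  have hzero : ‖(0 : A)‖ < r := by simpa using hr
  have hH0 : H 0 = 0 := by
    simpa using horth 0 0 hzero hzero (by simpa using hr) (mul_zero 0) (mul_zero 0)
  refine ⟨fun n a b hab hba => ?_, fun x => by rw [hH.coeff_zero, hH0]⟩
  refine hH.hasFPowerSeriesAt.apply_add_of_eventually_smul ?_ n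
  filter_upwards [eventually_norm_smul_lt a hr, eventually_norm_smul_lt b hr,
    eventually_norm_smul_lt (a + b) hr] with t hta htb htab
  rw [smul_add] at htab ⊢
  exact horth _ _ hta htb htab (by rw [smul_mul_smul_comm, hab, smul_zero])
    (by rw [smul_mul_smul_comm, hba, smul_zero])
end

section
/- Let A, B be C*-algebras, r > 0, and H : B_A(0;r) → B a holomorphic map with Taylor expansion H = ∑_{n≥0} P_n at 0. If H is zero product preserving on B_A(0;r) (i.e., ab = 0 implies H(a)H(b) = 0 for a, b ∈ B_A(0;r)), then for all m, n ≥ 0 and all a, b ∈ A with ab = 0 one has P_m(a)P_n(b) = 0. -/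
/-!
Along a complex line, `s ↦ H (s • a)` is a one-variable power series whose coefficients are
`Pₙ(a)`, and composing with left or right multiplication by a fixed element keeps it a power
series. Since `H (s • a) * H (t • b) = 0` for small `s, t`, uniqueness of one-variable power
series coefficients, applied first in `s` and then in `t`, gives `Pₘ(a) * Pₙ(b) = 0`.
-/

open Filter Topology ContinuousLinearMap

theorem HasFPowerSeriesAt.apply_eq_zero_of_eventually_smul {𝕜 E F G : Type*}
    [NontriviallyNormedField 𝕜] [NormedAddCommGroup E] [NormedSpace 𝕜 E]
    [NormedAddCommGroup F] [NormedSpace 𝕜 F] [NormedAddCommGroup G] [NormedSpace 𝕜 G]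
    {f : E → F} {p : FormalMultilinearSeries 𝕜 E F} (hf : HasFPowerSeriesAt f p 0)
    (L : F →L[𝕜] G) (a : E) (h : ∀ᶠ s in 𝓝 (0 : 𝕜), L (f (s • a)) = 0) (n : ℕ) :
    L (p n fun _ => a) = 0 := by
  have hline : HasFPowerSeriesAt (f ∘ toSpanSingleton 𝕜 a)
      (p.compContinuousLinearMap (toSpanSingleton 𝕜 a)) 0 :=
    HasFPowerSeriesAt.compContinuousLinearMap (by rwa [map_zero])
  obtain ⟨R, hR⟩ := hline
  simpa only [compFormalMultilinearSeries_apply, compContinuousMultilinearMap_coe,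
    Function.comp_apply, Function.comp_def, FormalMultilinearSeries.compContinuousLinearMap_apply,
    toSpanSingleton_apply, one_smul] using
    ((L.comp_hasFPowerSeriesOnBall hR).hasFPowerSeriesAt.congr h).apply_eq_zero n 1

theorem HasFPowerSeriesAt.apply_mul_apply_eq_zero {𝕜 E B : Type*}
    [NontriviallyNormedField 𝕜] [NormedAddCommGroup E] [NormedSpace 𝕜 E]
    [NonUnitalNormedRing B] [NormedSpace 𝕜 B] [IsScalarTower 𝕜 B B] [SMulCommClass 𝕜 B B]
    {f g : E → B} {p q : FormalMultilinearSeries 𝕜 E B}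
    (hf : HasFPowerSeriesAt f p 0) (hg : HasFPowerSeriesAt g q 0) {a b : E}
    (h : ∀ᶠ t in 𝓝 (0 : 𝕜), ∀ᶠ s in 𝓝 (0 : 𝕜), f (s • a) * g (t • b) = 0) (m n : ℕ) :
    (p m fun _ => a) * (q n fun _ => b) = 0 := by
  have hleft : ∀ᶠ t in 𝓝 (0 : 𝕜), (p m fun _ => a) * g (t • b) = 0 :=
    h.mono fun t ht => hf.apply_eq_zero_of_eventually_smul ((mul 𝕜 B).flip (g (t • b))) a ht m
  exact hg.apply_eq_zero_of_eventually_smul (mul 𝕜 B (p m fun _ => a)) b hleft n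

theorem stmt_3_general {A B : Type*} [NonUnitalCStarAlgebra A] [NonUnitalCStarAlgebra B]
    {r : ℝ} (H : A → B) (p : FormalMultilinearSeries ℂ A B)
    (hH : HasFPowerSeriesOnBall H p 0 (ENNReal.ofReal r))
    (hzp : ∀ a b : A, ‖a‖ < r → ‖b‖ < r → a * b = 0 → H a * H b = 0) :
    ∀ (m n : ℕ) (a b : A), a * b = 0 →
      (p m fun _ => a) * (p n fun _ => b) = 0 := by
  intro m n a b hab
  have hr : 0 < r := ENNReal.ofReal_pos.1 hH.r_pos
  have hsmall (x : A) : ∀ᶠ s in 𝓝 (0 : ℂ), ‖s • x‖ < r := by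
    have : Tendsto (fun s : ℂ => ‖s • x‖) (𝓝 0) (𝓝 0) :=
      Continuous.tendsto' (by fun_prop) _ _ (by simp)
    exact this.eventually (eventually_lt_nhds hr)
  refine hH.hasFPowerSeriesAt.apply_mul_apply_eq_zero hH.hasFPowerSeriesAt ?_ m n
  filter_upwards [hsmall b] with t ht
  filter_upwards [hsmall a] with s hs
  exact hzp _ _ hs ht (by rw [smul_mul_smul_comm, hab, smul_zero])

/-- if the holomorphic map `H = ∑ₙ Pₙ` on `B_A(0;r)` preserves zero
products, then its Taylor coefficients satisfy `Pₘ(a)Pₙ(b) = 0` whenever `ab = 0`. -/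
theorem stmt_3 {A B : Type*} [NonUnitalCStarAlgebra A] [NonUnitalCStarAlgebra B]
    {r : ℝ} (hr : 0 < r) (H : A → B) (p : FormalMultilinearSeries ℂ A B)
    (hH : HasFPowerSeriesOnBall H p 0 (ENNReal.ofReal r))
    (hzp : ∀ a b : A, ‖a‖ < r → ‖b‖ < r → a * b = 0 → H a * H b = 0) :
    ∀ (m n : ℕ) (a b : A), a * b = 0 →
      (p m fun _ => a) * (p n fun _ => b) = 0 :=
  stmt_3_general H p hH hzp
end

section
/- Let A, B be C*-algebras and P : A → B a bounded orthogonally additive n-homogeneous polynomial. If P is zero product preserving on the positive cone A₊ (ab = 0 implies P(a)P(b) = 0 for a, b ∈ A₊), then P is zero product preserving on A_sa (ab = 0 implies P(a)P(b) = 0 for self-adjoint a, b). -/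
/-- `P : E → F` is a bounded `n`-homogeneous polynomial: `P x = L(x,…,x)` for a bounded
symmetric `n`-linear map `L`. -/
def IsHomogPolynomial {E F : Type*} [NormedAddCommGroup E] [NormedSpace ℂ E]
    [NormedAddCommGroup F] [NormedSpace ℂ F] (n : ℕ) (P : E → F) : Prop :=
  ∃ L : ContinuousMultilinearMap ℂ (fun _ : Fin n => E) F,
    (∀ (v : Fin n → E) (σ : Equiv.Perm (Fin n)), (L fun i => v (σ i)) = L v) ∧
    ∀ x : E, P x = L fun _ => x

/-!
Every self-adjoint `x` splits as `x = x⁺ - x⁻` with `x⁺ x⁻ = x⁻ x⁺ = 0`, so orthogonal additivity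
and `n`-homogeneity give `P x = P x⁺ + (-1)ⁿ P x⁻`. If `a b = 0`, then any continuous function of
`a` vanishing at `0` annihilates `b` from the left (approximate it by polynomials without constant
term), and likewise on the other side; hence the four products `a^± b^±` vanish, and `P a * P b`
expands into four terms, each killed by the zero-product property on `A₊`.
-/

section Orthogonality

open scoped NonUnitalContinuousFunctionalCalculus

variable {A : Type*} [NonUnitalRing A] [StarRing A] [TopologicalSpace A] [T2Space A]
  [SeparatelyContinuousMul A] [Module ℝ A] [IsScalarTower ℝ A A] [SMulCommClass ℝ A A]
  [NonUnitalContinuousFunctionalCalculus ℝ A IsSelfAdjoint]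

-- No hypotheses on `f` or `a` are needed: otherwise `cfcₙ f a` is the junk value `0`.
lemma cfcₙ_mul_eq_zero (f : ℝ → ℝ) {a b : A} (hab : a * b = 0) : cfcₙ f a * b = 0 := by
  refine cfcₙ_cases (· * b = 0) a f (zero_mul b) fun _ _ ha ↦ ?_
  refine ContinuousMapZero.nonUnitalStarAlgHom_apply_mul_eq_zero _ b ?_ ?_
    (cfcₙHom_continuous ha) _ <;> simpa only [star_trivial, cfcₙHom_id ha]

lemma mul_cfcₙ_eq_zero (f : ℝ → ℝ) {a b : A} (hba : b * a = 0) : b * cfcₙ f a = 0 := by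
  refine cfcₙ_cases (b * · = 0) a f (mul_zero b) fun _ _ ha ↦ ?_
  refine ContinuousMapZero.mul_nonUnitalStarAlgHom_apply_eq_zero _ b ?_ ?_
    (cfcₙHom_continuous ha) _ <;> simpa only [star_trivial, cfcₙHom_id ha]

lemma cfcₙ_mul_cfcₙ_eq_zero (f g : ℝ → ℝ) {a b : A} (hab : a * b = 0) :
    cfcₙ f a * cfcₙ g b = 0 :=
  mul_cfcₙ_eq_zero g (cfcₙ_mul_eq_zero f hab)

end Orthogonality

namespace IsHomogPolynomial

variable {E F : Type*} [NormedAddCommGroup E] [NormedSpace ℂ E]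
    [NormedAddCommGroup F] [NormedSpace ℂ F] {n : ℕ} {P : E → F}

lemma map_smul (hP : IsHomogPolynomial n P) (c : ℂ) (x : E) : P (c • x) = c ^ n • P x := by
  obtain ⟨L, -, hL⟩ := hP
  simp only [hL]
  simpa using L.map_smul_univ (fun _ ↦ c) (fun _ ↦ x)

lemma map_neg (hP : IsHomogPolynomial n P) (x : E) : P (-x) = (-1 : ℂ) ^ n • P x := by
  rw [← hP.map_smul, neg_one_smul]

end IsHomogPolynomial

def IsOrthogonallyAdditive {A B : Type*} [Mul A] [Add A] [Zero A] [Add B] (P : A → B) : Prop :=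
  ∀ a b : A, a * b = 0 → b * a = 0 → P (a + b) = P a + P b

lemma IsHomogPolynomial.apply_eq_posPart_add_negPart {A B : Type*} [NonUnitalCStarAlgebra A]
    [NormedAddCommGroup B] [NormedSpace ℂ B] {n : ℕ} {P : A → B}
    (hP : IsHomogPolynomial n P) (horth : IsOrthogonallyAdditive P) {x : A}
    (hx : IsSelfAdjoint x) : P x = P x⁺ + (-1 : ℂ) ^ n • P x⁻ := by
  conv_lhs => rw [← CFC.posPart_sub_negPart x hx, sub_eq_add_neg]
  rw [horth _ _ (by simp) (by simp), hP.map_neg]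

/-- an orthogonally additive bounded `n`-homogeneous polynomial between
C*-algebras which preserves zero products of positive elements also preserves zero
products of self-adjoint elements. -/
theorem stmt_6 {A B : Type*} [NonUnitalCStarAlgebra A] [PartialOrder A] [StarOrderedRing A]
    [NonUnitalCStarAlgebra B]
    (n : ℕ) (P : A → B) (hP : IsHomogPolynomial n P)
    (horth : ∀ a b : A, a * b = 0 → b * a = 0 → P (a + b) = P a + P b)
    (hzp : ∀ a b : A, 0 ≤ a → 0 ≤ b → a * b = 0 → P a * P b = 0) :
    ∀ a b : A, IsSelfAdjoint a → IsSelfAdjoint b → a * b = 0 → P a * P b = 0 := by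
  intro a b ha hb hab
  have hpp : P a⁺ * P b⁺ = 0 :=
    hzp _ _ (CFC.posPart_nonneg a) (CFC.posPart_nonneg b) (cfcₙ_mul_cfcₙ_eq_zero _ _ hab)
  have hpn : P a⁺ * P b⁻ = 0 :=
    hzp _ _ (CFC.posPart_nonneg a) (CFC.negPart_nonneg b) (cfcₙ_mul_cfcₙ_eq_zero _ _ hab)
  have hnp : P a⁻ * P b⁺ = 0 :=
    hzp _ _ (CFC.negPart_nonneg a) (CFC.posPart_nonneg b) (cfcₙ_mul_cfcₙ_eq_zero _ _ hab)
  have hnn : P a⁻ * P b⁻ = 0 :=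
    hzp _ _ (CFC.negPart_nonneg a) (CFC.negPart_nonneg b) (cfcₙ_mul_cfcₙ_eq_zero _ _ hab)
  rw [hP.apply_eq_posPart_add_negPart horth ha, hP.apply_eq_posPart_add_negPart horth hb]
  simp only [add_mul, mul_add, smul_mul_assoc, mul_smul_comm, hpp, hpn, hnp, hnn, smul_zero,
    add_zero]
end

section
/- Let X be a locally compact Hausdorff space, B a C*-algebra, and P : C₀(X) → B a bounded orthogonally additive n-homogeneous polynomial which is zero product preserving on positive functions. Then P is zero product preserving on all of C₀(X): fg = 0 implies P(f)P(g) = 0 for all f, g ∈ C₀(X). -/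
open Finset in
lemma polar_aux {E M : Type*} [AddCommGroup E] [Module ℂ E] [AddCommGroup M] [Module ℂ M]
    {n : ℕ} (L : MultilinearMap ℂ (fun _ : Fin n => E) M)
    (hsymm : ∀ (v : Fin n → E) (σ : Equiv.Perm (Fin n)), (L fun i => v (σ i)) = L v)
    (v : Fin n → E) :
    ((n.factorial : ℂ)) • L v =
      ∑ S : Finset (Fin n), ((-1 : ℂ) ^ (n - S.card)) • L (fun _ => ∑ i ∈ S, v i) := by
  classical
  have h1 : ∀ S : Finset (Fin n), (L fun _ => ∑ i ∈ S, v i)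
      = ∑ d ∈ Fintype.piFinset (fun _ : Fin n => S), L (fun i => v (d i)) :=
    fun S => L.map_sum_finset (fun _ j => v j) (fun _ => S)
  have hcoef : ∀ d : Fin n → Fin n,
      (∑ S : Finset (Fin n), if (∀ i, d i ∈ S) then ((-1:ℂ) ^ (n - S.card)) else 0)
        = if Function.Surjective d then 1 else 0 := by
    intro d
    set T : Finset (Fin n) := Finset.image d Finset.univ with hT
    have hsub : ∀ S : Finset (Fin n), (∀ i, d i ∈ S) ↔ T ⊆ S := by
      intro S
      constructor
      · intro h x hx
        rcases Finset.mem_image.mp hx with ⟨i, _, rfl⟩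
        exact h i
      · intro h i
        exact h (Finset.mem_image_of_mem d (Finset.mem_univ i))
    simp_rw [hsub]
    rw [← Finset.sum_filter]
    have key : ∑ S ∈ Finset.univ.filter (fun S => T ⊆ S), ((-1:ℂ)) ^ (n - S.card)
        = ∑ U ∈ Tᶜ.powerset, ((-1:ℂ)) ^ (n - (T ∪ U).card) := by
      refine Finset.sum_nbij' (fun S => S \ T) (fun U => T ∪ U) ?_ ?_ ?_ ?_ ?_
      · intro S hS
        simp only [Finset.mem_filter, Finset.mem_univ, true_and] at hS
        simp only [Finset.mem_powerset]
        intro x hx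
        simp only [Finset.mem_sdiff] at hx
        simpa [Finset.mem_compl] using hx.2
      · intro U hU
        simp [Finset.subset_union_left]
      · intro S hS
        simp only [Finset.mem_filter, Finset.mem_univ, true_and] at hS
        exact Finset.union_sdiff_of_subset hS
      · intro U hU
        simp only [Finset.mem_powerset] at hU
        refine Finset.union_sdiff_cancel_left ?_
        exact Finset.disjoint_left.mpr fun a haT haU => (Finset.mem_compl.mp (hU haU)) haT
      · intro S hS
        simp only [Finset.mem_filter, Finset.mem_univ, true_and] at hS
        rw [Finset.union_sdiff_of_subset hS]
    rw [key]
    have hterm : ∀ U ∈ Tᶜ.powerset, ((-1:ℂ)) ^ (n - (T ∪ U).card)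
        = (-1) ^ (Tᶜ.card) * (-1) ^ U.card := by
      intro U hU
      have hU' : U ⊆ Tᶜ := Finset.mem_powerset.mp hU
      have hd : Disjoint T U :=
        Finset.disjoint_left.mpr fun a haT haU => (Finset.mem_compl.mp (hU' haU)) haT
      rw [Finset.card_union_of_disjoint hd]
      have hc : T.card + Tᶜ.card = n := by
        simpa using Finset.card_add_card_compl T
      have hle : U.card ≤ Tᶜ.card := Finset.card_le_card hU'
      have h1 : n - (T.card + U.card) = Tᶜ.card - U.card := by omega
      rw [h1]
      have h2 : ((-1:ℂ)) ^ (Tᶜ.card - U.card) * ((-1:ℂ)) ^ U.card = (-1) ^ Tᶜ.card := by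
        rw [← pow_add, Nat.sub_add_cancel hle]
      have h3 : ((-1:ℂ)) ^ U.card * ((-1:ℂ)) ^ U.card = 1 := by
        rw [← mul_pow]; simp
      calc ((-1:ℂ)) ^ (Tᶜ.card - U.card)
          = ((-1:ℂ)) ^ (Tᶜ.card - U.card) * (((-1:ℂ)) ^ U.card * ((-1:ℂ)) ^ U.card) := by
            rw [h3, mul_one]
        _ = (((-1:ℂ)) ^ (Tᶜ.card - U.card) * ((-1:ℂ)) ^ U.card) * ((-1:ℂ)) ^ U.card := by ring
        _ = (-1) ^ (Tᶜ.card) * (-1) ^ U.card := by rw [h2]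
    rw [Finset.sum_congr rfl hterm, ← Finset.mul_sum]
    have hps : ∑ U ∈ Tᶜ.powerset, ((-1:ℂ)) ^ U.card = if Tᶜ = ∅ then 1 else 0 := by
      have h := Finset.sum_powerset_neg_one_pow_card (α := Fin n) (x := Tᶜ)
      have h2 : (((∑ U ∈ Tᶜ.powerset, ((-1:ℤ)) ^ U.card : ℤ)) : ℂ)
          = ∑ U ∈ Tᶜ.powerset, ((-1:ℂ)) ^ U.card := by push_cast; ring
      rw [← h2, h]
      split_ifs <;> simp
    rw [hps]
    by_cases hsurj : Function.Surjective d
    · have : T = Finset.univ := Finset.image_univ_of_surjective hsurj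
      simp [this, hsurj]
    · have hTne : T ≠ Finset.univ := by
        intro hTu
        apply hsurj
        intro y
        have : y ∈ T := hTu ▸ Finset.mem_univ y
        rcases Finset.mem_image.mp this with ⟨i, _, rfl⟩
        exact ⟨i, rfl⟩
      have : Tᶜ ≠ ∅ := by
        simpa [Finset.compl_eq_empty_iff] using hTne
      simp [this, hsurj]
  symm
  calc ∑ S : Finset (Fin n), ((-1 : ℂ) ^ (n - S.card)) • L (fun _ => ∑ i ∈ S, v i)
      = ∑ S : Finset (Fin n), ∑ d ∈ Fintype.piFinset (fun _ : Fin n => S),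
          ((-1 : ℂ) ^ (n - S.card)) • L (fun i => v (d i)) := by
        simp_rw [h1, Finset.smul_sum]
    _ = ∑ S : Finset (Fin n), ∑ d : Fin n → Fin n,
          if (∀ i, d i ∈ S) then ((-1 : ℂ) ^ (n - S.card)) • L (fun i => v (d i)) else 0 := by
        refine Finset.sum_congr rfl fun S _ => ?_
        rw [← Finset.sum_filter]
        refine Finset.sum_congr ?_ fun _ _ => rfl
        ext d
        simp [Fintype.mem_piFinset]
    _ = ∑ d : Fin n → Fin n, ∑ S : Finset (Fin n),
          if (∀ i, d i ∈ S) then ((-1 : ℂ) ^ (n - S.card)) • L (fun i => v (d i)) else 0 := by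
        rw [Finset.sum_comm]
    _ = ∑ d : Fin n → Fin n,
          (∑ S : Finset (Fin n), if (∀ i, d i ∈ S) then ((-1:ℂ) ^ (n - S.card)) else 0)
            • L (fun i => v (d i)) := by
        refine Finset.sum_congr rfl fun d _ => ?_
        rw [Finset.sum_smul]
        refine Finset.sum_congr rfl fun S _ => ?_
        rw [ite_smul, zero_smul]
    _ = ∑ d : Fin n → Fin n,
          (if Function.Surjective d then (1:ℂ) else 0) • L (fun i => v (d i)) := by
        simp_rw [hcoef]
    _ = ∑ d ∈ Finset.univ.filter (fun d : Fin n → Fin n => Function.Surjective d),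
          L (fun i => v (d i)) := by
        simp_rw [ite_smul, one_smul, zero_smul, Finset.sum_filter]
    _ = ∑ σ : Equiv.Perm (Fin n), L (fun i => v (σ i)) := by
        have hb : (∑ σ : Equiv.Perm (Fin n), L (fun i => v (σ i)))
            = ∑ d ∈ Finset.univ.filter (fun d : Fin n → Fin n => Function.Surjective d),
              L (fun i => v (d i)) := by
          refine Finset.sum_bij (fun (σ : Equiv.Perm (Fin n)) (_ : σ ∈ Finset.univ) => (σ : Fin n → Fin n)) ?_ ?_ ?_ ?_
          · intro σ _
            simp [σ.surjective]
          · intro σ _ τ _ h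
            exact Equiv.coe_fn_injective h
          · intro d hd
            simp only [Finset.mem_filter, Finset.mem_univ, true_and] at hd
            have hbij : Function.Bijective d := Finite.surjective_iff_bijective.mp hd
            exact ⟨Equiv.ofBijective d hbij, Finset.mem_univ _, rfl⟩
          · intro σ _
            rfl
        exact hb.symm
    _ = ((n.factorial : ℂ)) • L v := by
        rw [Finset.sum_congr rfl fun σ _ => hsymm v σ, Finset.sum_const]
        rw [Nat.cast_smul_eq_nsmul]
        simp [Fintype.card_perm, Fintype.card_fin]

open scoped ZeroAtInfty ComplexOrder

noncomputable def cpart {X : Type*} [TopologicalSpace X] (φ : ℂ → ℝ) (hφ : Continuous φ)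
    (h0 : φ 0 = 0) (f : C₀(X, ℂ)) : C₀(X, ℂ) :=
  ⟨⟨fun x => ((φ (f x) : ℝ) : ℂ), Complex.continuous_ofReal.comp (hφ.comp f.continuous)⟩, by
    have h1 : Filter.Tendsto (fun x => ((φ (f x) : ℝ) : ℂ)) (Filter.cocompact X)
        (nhds ((φ 0 : ℝ) : ℂ)) :=
      ((Complex.continuous_ofReal.comp hφ).tendsto 0).comp f.zero_at_infty'
    simpa [h0] using h1⟩

@[simp] lemma cpart_apply {X : Type*} [TopologicalSpace X] (φ : ℂ → ℝ) (hφ : Continuous φ)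
    (h0 : φ 0 = 0) (f : C₀(X, ℂ)) (x : X) : cpart φ hφ h0 f x = ((φ (f x) : ℝ) : ℂ) := rfl

lemma c0_sum_apply {X : Type*} [TopologicalSpace X] {ι : Type*} (s : Finset ι)
    (v : ι → C₀(X, ℂ)) (x : X) : (∑ i ∈ s, v i) x = ∑ i ∈ s, v i x := by
  classical
  induction s using Finset.cons_induction with
  | empty => simp
  | cons a s ha ih =>
      rw [Finset.sum_cons, Finset.sum_cons, ← ih]
      exact congrFun (ZeroAtInftyContinuousMap.coe_add _ _) x

lemma complex_decomp (z : ℂ) :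
    z = ((max z.re 0 : ℝ) : ℂ) - ((max (-z.re) 0 : ℝ) : ℂ)
        + Complex.I * (((max z.im 0 : ℝ) : ℂ) - ((max (-z.im) 0 : ℝ) : ℂ)) := by
  have h1 : max z.re 0 - max (-z.re) 0 = z.re := max_zero_sub_max_neg_zero_eq_self z.re
  have h2 : max z.im 0 - max (-z.im) 0 = z.im := max_zero_sub_max_neg_zero_eq_self z.im
  apply Complex.ext <;> simp [h1, h2]

/-- decomposition of an element of `C₀(X, ℂ)` into four nonneg parts -/
lemma c0_decomp {X : Type*} [TopologicalSpace X] (f : C₀(X, ℂ)) :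
    ∃ (c : Fin 4 → ℂ) (u : Fin 4 → C₀(X, ℂ)),
      (∀ k x, 0 ≤ u k x) ∧ (∀ k x, f x = 0 → u k x = 0) ∧
      f = ∑ k : Fin 4, c k • u k := by
  refine ⟨![1, -1, Complex.I, -Complex.I],
    ![cpart (fun z => max z.re 0) (by fun_prop) (by simp) f,
      cpart (fun z => max (-z.re) 0) (by fun_prop) (by simp) f,
      cpart (fun z => max z.im 0) (by fun_prop) (by simp) f,
      cpart (fun z => max (-z.im) 0) (by fun_prop) (by simp) f], ?_, ?_, ?_⟩
  · intro k x
    fin_cases k <;> simp [Complex.zero_le_real, le_max_right]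
  · intro k x hx
    fin_cases k <;> simp [hx]
  · ext x
    rw [c0_sum_apply]
    rw [Fin.sum_univ_four]
    have hs : ∀ (c : ℂ) (h : C₀(X, ℂ)), (c • h) x = c • h x := fun c h => rfl
    simp only [hs, Matrix.cons_val_zero, Matrix.cons_val_one, Matrix.head_cons,
      Matrix.cons_val_two, Matrix.tail_cons, Matrix.cons_val_three, cpart_apply,
      smul_eq_mul, one_mul, neg_mul]
    refine (complex_decomp (f x)).trans ?_
    ring



open scoped ZeroAtInfty ComplexOrder

/-- a bounded orthogonally additive `n`-homogeneous polynomial on `C₀(X)`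
which preserves zero products of positive functions preserves all zero products. -/
theorem stmt_7 {X : Type*} [TopologicalSpace X] [LocallyCompactSpace X] [T2Space X]
    {B : Type*} [NonUnitalCStarAlgebra B]
    (n : ℕ) (hn : 0 < n) (P : C₀(X, ℂ) → B) (hP : IsHomogPolynomial n P)
    (horth : ∀ f g : C₀(X, ℂ), f * g = 0 → P (f + g) = P f + P g)
    (hzp : ∀ f g : C₀(X, ℂ), (∀ x, 0 ≤ f x) → (∀ x, 0 ≤ g x) → f * g = 0 →
      P f * P g = 0) :
    ∀ f g : C₀(X, ℂ), f * g = 0 → P f * P g = 0 := by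
  classical
  obtain ⟨L, hsymm, hrep⟩ := hP
  intro f g hfg
  obtain ⟨c, u, hu_pos, hu_zero, hu_eq⟩ := c0_decomp f
  obtain ⟨e, w, hw_pos, hw_zero, hw_eq⟩ := c0_decomp g
  set Qf : C₀(X, ℂ) → Prop :=
    fun h => (∀ x, 0 ≤ h x) ∧ (∀ x, f x = 0 → h x = 0) with hQf
  set Qg : C₀(X, ℂ) → Prop :=
    fun h => (∀ x, 0 ≤ h x) ∧ (∀ x, g x = 0 → h x = 0) with hQg
  have hQfsum : ∀ (S : Finset (Fin n)) (v : Fin n → C₀(X, ℂ)),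
      (∀ i, Qf (v i)) → Qf (∑ i ∈ S, v i) := by
    intro S v hv
    constructor
    · intro x
      rw [c0_sum_apply]
      exact Finset.sum_nonneg fun i _ => (hv i).1 x
    · intro x hx
      rw [c0_sum_apply]
      exact Finset.sum_eq_zero fun i _ => (hv i).2 x hx
  have hQgsum : ∀ (S : Finset (Fin n)) (v : Fin n → C₀(X, ℂ)),
      (∀ i, Qg (v i)) → Qg (∑ i ∈ S, v i) := by
    intro S v hv
    constructor
    · intro x
      rw [c0_sum_apply]
      exact Finset.sum_nonneg fun i _ => (hv i).1 x
    · intro x hx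
      rw [c0_sum_apply]
      exact Finset.sum_eq_zero fun i _ => (hv i).2 x hx
  have hmul : ∀ h k : C₀(X, ℂ), Qf h → Qg k → h * k = 0 := by
    intro h k hh hk
    ext x
    have hx : f x * g x = 0 := by
      have h0 : (f * g) x = 0 := by rw [hfg]; rfl
      exact h0
    have hor : h x = 0 ∨ k x = 0 := by
      rcases mul_eq_zero.mp hx with h1 | h1
      · exact Or.inl (hh.2 x h1)
      · exact Or.inr (hk.2 x h1)
    have : (h * k) x = h x * k x := rfl
    rw [this]
    rcases hor with h1 | h1 <;> simp [h1]
  have keyLL : ∀ v w' : Fin n → C₀(X, ℂ), (∀ i, Qf (v i)) → (∀ j, Qg (w' j)) →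
      (L.toMultilinearMap v) * (L.toMultilinearMap w') = 0 := by
    intro v w' hv hw
    have hpv := polar_aux L.toMultilinearMap (fun a σ => hsymm a σ) v
    have hpw := polar_aux L.toMultilinearMap (fun a σ => hsymm a σ) w'
    have hzero : ((n.factorial : ℂ) • L.toMultilinearMap v) *
        ((n.factorial : ℂ) • L.toMultilinearMap w') = 0 := by
      rw [hpv, hpw, Finset.sum_mul_sum]
      refine Finset.sum_eq_zero fun S _ => Finset.sum_eq_zero fun T _ => ?_
      rw [smul_mul_smul_comm]
      have h1 : Qf (∑ i ∈ S, v i) := hQfsum S v hv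
      have h2 : Qg (∑ j ∈ T, w' j) := hQgsum T w' hw
      have e1 : (L.toMultilinearMap fun _ => ∑ i ∈ S, v i) = P (∑ i ∈ S, v i) :=
        (hrep _).symm
      have e2 : (L.toMultilinearMap fun _ => ∑ j ∈ T, w' j) = P (∑ j ∈ T, w' j) :=
        (hrep _).symm
      rw [e1, e2, hzp _ _ h1.1 h2.1 (hmul _ _ h1 h2), smul_zero]
    rw [smul_mul_smul_comm] at hzero
    have hne : ((n.factorial : ℂ) * (n.factorial : ℂ)) ≠ 0 := by
      have h1 : (n.factorial : ℂ) ≠ 0 := Nat.cast_ne_zero.mpr (Nat.factorial_ne_zero n)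
      exact mul_ne_zero h1 h1
    rcases smul_eq_zero.mp hzero with h | h
    · exact absurd h hne
    · exact h
  have e1 : P f = ∑ r : (Fin n → Fin 4),
      (∏ i, c (r i)) • (L.toMultilinearMap fun i => u (r i)) := by
    rw [hrep]
    calc (L fun _ => f) = L.toMultilinearMap (fun _ => ∑ k : Fin 4, c k • u k) := by
          rw [← hu_eq]; rfl
      _ = ∑ r : (Fin n → Fin 4), L.toMultilinearMap (fun i => c (r i) • u (r i)) :=
          L.toMultilinearMap.map_sum (fun _ k => c k • u k)
      _ = _ := Finset.sum_congr rfl fun r _ =>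
          L.toMultilinearMap.map_smul_univ (fun i => c (r i)) (fun i => u (r i))
  have e2 : P g = ∑ r : (Fin n → Fin 4),
      (∏ i, e (r i)) • (L.toMultilinearMap fun i => w (r i)) := by
    rw [hrep]
    calc (L fun _ => g) = L.toMultilinearMap (fun _ => ∑ k : Fin 4, e k • w k) := by
          rw [← hw_eq]; rfl
      _ = ∑ r : (Fin n → Fin 4), L.toMultilinearMap (fun i => e (r i) • w (r i)) :=
          L.toMultilinearMap.map_sum (fun _ k => e k • w k)
      _ = _ := Finset.sum_congr rfl fun r _ =>
          L.toMultilinearMap.map_smul_univ (fun i => e (r i)) (fun i => w (r i))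
  rw [e1, e2, Finset.sum_mul_sum]
  refine Finset.sum_eq_zero fun r _ => Finset.sum_eq_zero fun t _ => ?_
  rw [smul_mul_smul_comm,
    keyLL _ _ (fun i => ⟨fun x => hu_pos _ x, fun x hx => hu_zero _ x hx⟩)
      (fun j => ⟨fun x => hw_pos _ x, fun x hx => hw_zero _ x hx⟩), smul_zero]
end

section
/- Let X, Y be locally compact Hausdorff spaces and P : C₀(X) → C₀(Y) a bounded orthogonally additive n-homogeneous polynomial of the form P(f)(y) = h(y) f(φ(y))ⁿ on the cozero set Y₁ of h (and 0 off Y₁). If P(f) = 0 implies f = 0 for all f ∈ C₀(X)₊ (trivial positive kernel), then φ(Y₁) is dense in X. -/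
open scoped ZeroAtInfty ComplexOrder

/-- if the weighted composition polynomial
`P(f)(y) = h(y) f(φ(y))ⁿ` (on the cozero set `Y₁` of `h`, and `0` off `Y₁`)
has trivial positive kernel, then `φ(Y₁)` is dense in `X`. -/
theorem stmt_10 {X Y : Type*} [TopologicalSpace X] [LocallyCompactSpace X] [T2Space X]
    [TopologicalSpace Y] [LocallyCompactSpace Y] [T2Space Y]
    (n : ℕ) (hn : 0 < n) (P : C₀(X, ℂ) → C₀(Y, ℂ)) (hP : IsHomogPolynomial n P)
    (horth : ∀ f g : C₀(X, ℂ), f * g = 0 → P (f + g) = P f + P g)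
    (h : Y → ℂ) (φ : Y → X)
    (hcont : ContinuousOn h {y | h y ≠ 0}) (hφ : ContinuousOn φ {y | h y ≠ 0})
    (hform : ∀ (f : C₀(X, ℂ)) (y : Y), h y ≠ 0 → P f y = h y * (f (φ y)) ^ n)
    (hzero : ∀ (f : C₀(X, ℂ)) (y : Y), h y = 0 → P f y = 0)
    (hker : ∀ f : C₀(X, ℂ), (∀ x, 0 ≤ f x) → P f = 0 → f = 0) :
    Dense (φ '' {y | h y ≠ 0}) := by
  by_contra hd
  rw [dense_iff_closure_eq] at hd
  obtain ⟨x, hx⟩ : ∃ x, x ∉ closure (φ '' {y | h y ≠ 0}) := by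
    by_contra hc
    push_neg at hc
    exact hd (Set.eq_univ_of_forall hc)
  obtain ⟨f, hf1, hf0, hfc, hficc⟩ :=
    exists_continuous_one_zero_of_isCompact (isCompact_singleton (x := x))
      isClosed_closure (Set.disjoint_singleton_left.mpr hx)
  set g : C₀(X, ℂ) :=
    { toFun := fun z => (f z : ℂ)
      continuous_toFun := Complex.continuous_ofReal.comp f.continuous
      zero_at_infty' := by
        have : HasCompactSupport (fun z => (f z : ℂ)) := by
          apply hfc.comp_left (g := (Complex.ofReal : ℝ → ℂ))
          simp
        exact this.is_zero_at_infty }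
  have hgpos : ∀ z, (0 : ℂ) ≤ g z := fun z => by
    show (0 : ℂ) ≤ (f z : ℂ)
    exact Complex.zero_le_real.mpr (hficc z).1
  have hPg : P g = 0 := by
    ext y
    by_cases hy : h y = 0
    · simpa using hzero g y hy
    · rw [hform g y hy]
      have : f (φ y) = 0 := hf0 (subset_closure ⟨y, hy, rfl⟩)
      simp [g, this, zero_pow hn.ne']
  have := hker g hgpos hPg
  have hx1 : g x = 1 := by simp [g, hf1 rfl]
  rw [this] at hx1
  simp at hx1
end

section
/- Let X, Y be locally compact Hausdorff spaces and S : C₀(X) → C₀(Y) a bounded linear map with ‖Sf‖ = ‖f‖ for all f ∈ C₀(X)₊, whose range strongly separates points of Y (for distinct y₁, y₂ there is f with |Sf(y₁)| ≠ |Sf(y₂)|). Then there exist a homeomorphism ψ from X onto ψ(X) ⊆ Y and a continuous unimodular function k : X → ℂ such that Sf(ψ(x)) = k(x)f(x) for all f ∈ C₀(X) and x ∈ X. -/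
/-!
Call `e ∈ C₀(X)₊` a peak function at `x` if `‖e‖ = 1 = e x`. The images `S e` have norm one, and
the compact sets `{y | ‖S e y‖ = 1}` are directed: the midpoint of two peak functions is again one,
and in the strictly convex space `ℂ` a midpoint of norm one forces both ends to coincide with norm
one. At a point `y` of their intersection all `S e y` equal one unimodular `c`. The functional
`f ↦ S f y` kills every `u ≥ 0` vanishing near `x`, because `u / M + e` is a peak function when `e`
is supported where `u` vanishes; splitting into nonnegative parts and approximating `f` by `f e`
gives `S f y = c f(x)`. Put `ψ x = y`, `k x = c`. The map `y ↦ (‖S f y‖)_f` is injective, hence an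
embedding on compact sets, and sends `ψ x` to `(‖f x‖)_f`, which embeds `X`; so `ψ` is an
embedding.
-/

open scoped ZeroAtInfty ComplexOrder
open Filter Topology Set

namespace ZeroAtInftyContinuousMap

section Normed

variable {X β : Type*} [TopologicalSpace X] [NormedAddCommGroup β]

theorem norm_apply_le (f : C₀(X, β)) (x : X) : ‖f x‖ ≤ ‖f‖ :=
  f.toBCF.norm_coe_le_norm x

theorem norm_le_of_forall_le (f : C₀(X, β)) {C : ℝ} (hC : 0 ≤ C) (h : ∀ x, ‖f x‖ ≤ C) :
    ‖f‖ ≤ C :=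
  (f.toBCF.norm_le hC).2 h

theorem isCompact_setOf_le_norm (f : C₀(X, β)) {c : ℝ} (hc : 0 < c) :
    IsCompact {x | c ≤ ‖f x‖} := by
  have hsmall : ∀ᶠ x in cocompact X, ‖f x‖ < c :=
    (tendsto_norm_zero.comp f.zero_at_infty').eventually (gt_mem_nhds hc)
  obtain ⟨K, hK, hKsmall⟩ := mem_cocompact.mp hsmall
  refine hK.of_isClosed_subset (isClosed_le continuous_const f.continuous.norm) fun x hx => ?_
  by_contra hxK
  exact (hKsmall hxK).not_ge (show c ≤ ‖f x‖ from hx)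

theorem exists_norm_apply_eq (f : C₀(X, β)) (hf : f ≠ 0) : ∃ x, ‖f x‖ = ‖f‖ := by
  obtain ⟨x₀, hx₀⟩ : ∃ x₀, f x₀ ≠ 0 := by
    by_contra! h
    exact hf (ext h)
  have hsmall : ∀ᶠ x in cocompact X, ‖f x‖ ≤ ‖f x₀‖ :=
    (tendsto_norm_zero.comp f.zero_at_infty').eventually (ge_mem_nhds (norm_pos_iff.2 hx₀))
  obtain ⟨x, hx⟩ := f.continuous.norm.exists_forall_ge' x₀ hsmall
  exact ⟨x, le_antisymm (f.norm_apply_le x) (f.norm_le_of_forall_le (norm_nonneg _) hx)⟩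

variable (𝕜 : Type*) [NormedField 𝕜] [NormedSpace 𝕜 β]

noncomputable def evalCLM (x : X) : C₀(X, β) →L[𝕜] β :=
  LinearMap.mkContinuous
    { toFun := fun f => f x, map_add' := fun _ _ => rfl, map_smul' := fun _ _ => rfl } 1
    fun f => by simpa using f.norm_apply_le x

end Normed

variable {X β γ : Type*} [TopologicalSpace X] [TopologicalSpace β] [Zero β]
  [TopologicalSpace γ] [Zero γ]

def compLeft (g : β → γ) (hg : Continuous g) (hg₀ : g 0 = 0) (f : C₀(X, β)) : C₀(X, γ) where
  toFun := g ∘ f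
  continuous_toFun := hg.comp f.continuous
  zero_at_infty' := hg₀ ▸ (hg.tendsto 0).comp f.zero_at_infty'

@[simp]
theorem compLeft_apply (g : β → γ) (hg : Continuous g) (hg₀ : g 0 = 0) (f : C₀(X, β)) (x : X) :
    compLeft g hg hg₀ f x = g (f x) := rfl

end ZeroAtInftyContinuousMap

open ZeroAtInftyContinuousMap

section PeakFunction

variable {X : Type*} [TopologicalSpace X]

structure IsPeakFunction (e : C₀(X, ℂ)) (x : X) : Prop where
  nonneg : ∀ z, 0 ≤ e z
  norm_le_one : ∀ z, ‖e z‖ ≤ 1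
  apply_eq_one : e x = 1

namespace IsPeakFunction

variable {e e' : C₀(X, ℂ)} {x : X}

theorem norm_eq_one (he : IsPeakFunction e x) : ‖e‖ = 1 :=
  le_antisymm (e.norm_le_of_forall_le zero_le_one he.norm_le_one)
    (by simpa [he.apply_eq_one] using e.norm_apply_le x)

theorem midpoint (he : IsPeakFunction e x) (he' : IsPeakFunction e' x) :
    IsPeakFunction ((2⁻¹ : ℂ) • (e + e')) x where
  nonneg z := mul_nonneg (by positivity) (add_nonneg (he.nonneg z) (he'.nonneg z))
  norm_le_one z := by
    have := norm_add_le (e z) (e' z)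
    have := he.norm_le_one z
    have := he'.norm_le_one z
    simp only [coe_smul, coe_add, Pi.smul_apply, Pi.add_apply, smul_eq_mul, norm_mul, norm_inv,
      Complex.norm_ofNat]
    linarith
  apply_eq_one := by norm_num [he.apply_eq_one, he'.apply_eq_one]

end IsPeakFunction

variable [LocallyCompactSpace X] [RegularSpace X]

theorem exists_isPeakFunction_support_subset (x : X) {U : Set X} (hU : IsOpen U)
    (hxU : x ∈ U) :
    ∃ e : C₀(X, ℂ), IsPeakFunction e x ∧ Function.support e ⊆ U ∧ ∀ᶠ z in 𝓝 x, e z = 1 := by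
  obtain ⟨K, hK, hxK, hKU⟩ := exists_compact_subset hU hxU
  obtain ⟨g, hg1, hg0, hgc, hg01⟩ := exists_continuous_one_zero_of_isCompact hK
    hU.isClosed_compl (disjoint_compl_right_iff_subset.mpr hKU)
  let e : C₀(X, ℂ) :=
    compLeft ((↑) : ℝ → ℂ) Complex.continuous_ofReal Complex.ofReal_zero ⟨g, hgc.is_zero_at_infty⟩
  have he : ∀ z, e z = g z := fun _ => rfl
  refine ⟨e, ⟨fun z => ?_, fun z => ?_, ?_⟩, fun z hz => ?_, ?_⟩
  · simpa [he] using (hg01 z).1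
  · simpa [he, abs_of_nonneg (hg01 z).1] using (hg01 z).2
  · simp [he, hg1 (interior_subset hxK)]
  · by_contra hzU
    simp [he, hg0 hzU] at hz
  · filter_upwards [mem_interior_iff_mem_nhds.mp hxK] with z hz
    simp [he, hg1 hz]

theorem exists_isPeakFunction (x : X) : ∃ e : C₀(X, ℂ), IsPeakFunction e x :=
  (exists_isPeakFunction_support_subset x isOpen_univ trivial).imp fun _ he => he.1

end PeakFunction

section Functional

variable {X : Type*} [TopologicalSpace X]

theorem mem_span_nonneg_vanishing (u : C₀(X, ℂ)) :
    u ∈ Submodule.span ℂ {p : C₀(X, ℂ) | (∀ z, 0 ≤ p z) ∧ ∀ z, u z = 0 → p z = 0} := by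
  have hmem : ∀ (g : ℂ → ℝ) (hg : Continuous g) (hg₀ : g 0 = 0), (∀ w, 0 ≤ g w) →
      compLeft (fun w => (g w : ℂ)) (by fun_prop) (by simp [hg₀]) u ∈
        Submodule.span ℂ {p : C₀(X, ℂ) | (∀ z, 0 ≤ p z) ∧ ∀ z, u z = 0 → p z = 0} :=
    fun g hg hg₀ hnn => Submodule.subset_span
      ⟨fun z => Complex.zero_le_real.2 (hnn _), fun z hz => by simp [hz, hg₀]⟩
  have hre : ∀ w : ℂ, 0 ≤ ‖w‖ + w.re := fun w => by
    linarith [neg_abs_le w.re, Complex.abs_re_le_norm w]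
  have him : ∀ w : ℂ, 0 ≤ ‖w‖ + w.im := fun w => by
    linarith [neg_abs_le w.im, Complex.abs_im_le_norm w]
  have h₀ := hmem (‖·‖) continuous_norm norm_zero norm_nonneg
  have h₁ := hmem (fun w => ‖w‖ + w.re) (by fun_prop) (by simp) hre
  have h₂ := hmem (fun w => ‖w‖ + w.im) (by fun_prop) (by simp) him
  convert add_mem (sub_mem h₁ h₀) (Submodule.smul_mem _ Complex.I (sub_mem h₂ h₀)) using 1
  ext z
  simp only [coe_add, coe_sub, coe_smul, Pi.add_apply, Pi.sub_apply, Pi.smul_apply,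
    compLeft_apply, smul_eq_mul, Complex.ofReal_add]
  linear_combination (Complex.re_add_im (u z)).symm

variable [LocallyCompactSpace X] [RegularSpace X] {x : X} {c : ℂ}

theorem apply_eq_zero_of_nonneg_of_eventually_eq_zero (φ : C₀(X, ℂ) →ₗ[ℂ] ℂ)
    (hφ : ∀ e, IsPeakFunction e x → φ e = c) {u : C₀(X, ℂ)} (hu₀ : ∀ z, 0 ≤ u z)
    (hu : ∀ᶠ z in 𝓝 x, u z = 0) : φ u = 0 := by
  obtain ⟨V, huV, hVo, hxV⟩ := eventually_nhds_iff.1 hu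
  obtain ⟨e, he, hsupp, -⟩ := exists_isPeakFunction_support_subset x hVo hxV
  set M : ℝ := ‖u‖ + 1
  have hM : 0 < M := by positivity
  have hpeak : IsPeakFunction (((M⁻¹ : ℝ) : ℂ) • u + e) x := by
    refine ⟨fun z => ?_, fun z => ?_, ?_⟩
    · exact add_nonneg (mul_nonneg (Complex.zero_le_real.2 (by positivity)) (hu₀ z)) (he.nonneg z)
    · by_cases hz : z ∈ V
      · simpa [huV z hz] using he.norm_le_one z
      · have hez : e z = 0 := Function.notMem_support.1 fun h => hz (hsupp h)
        simp only [coe_add, coe_smul, Pi.add_apply, Pi.smul_apply, hez, add_zero, smul_eq_mul,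
          norm_mul, Complex.norm_real, Real.norm_eq_abs, abs_inv, abs_of_pos hM]
        exact inv_mul_le_one_of_le₀ ((u.norm_apply_le z).trans (by linarith)) hM.le
    · simp [huV x hxV, he.apply_eq_one]
  have h := hφ _ hpeak
  rw [map_add, map_smul, hφ e he, add_eq_right, smul_eq_mul] at h
  exact (mul_eq_zero.1 h).resolve_left (by simp [hM.ne'])

theorem apply_eq_zero_of_eventually_eq_zero (φ : C₀(X, ℂ) →ₗ[ℂ] ℂ)
    (hφ : ∀ e, IsPeakFunction e x → φ e = c) {u : C₀(X, ℂ)} (hu : ∀ᶠ z in 𝓝 x, u z = 0) :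
    φ u = 0 :=
  LinearMap.mem_ker.1 <| Submodule.span_le.2 (fun _ hp =>
    apply_eq_zero_of_nonneg_of_eventually_eq_zero φ hφ hp.1 (hu.mono hp.2))
      (mem_span_nonneg_vanishing u)

theorem apply_eq_mul_of_isPeakFunction (φ : C₀(X, ℂ) →L[ℂ] ℂ)
    (hφ : ∀ e, IsPeakFunction e x → φ e = c) (f : C₀(X, ℂ)) : φ f = c * f x := by
  refine eq_of_forall_dist_le fun δ hδ => ?_
  set ε := δ / (‖φ‖ + 1)
  have hε : 0 < ε := by positivity
  obtain ⟨e, he, hsupp, he₁⟩ :=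
    exists_isPeakFunction_support_subset x (U := {z | ‖f z - f x‖ < ε})
      (isOpen_lt (by fun_prop) continuous_const) (by simpa using hε)
  have hloc : φ f = φ (f * e) := by
    rw [← sub_eq_zero, ← map_sub]
    exact apply_eq_zero_of_eventually_eq_zero φ.toLinearMap hφ (he₁.mono fun z hz => by simp [hz])
  set g := f * e - f x • e
  have hg : ‖g‖ ≤ ε := g.norm_le_of_forall_le hε.le fun z => by
    have hgz : g z = (f z - f x) * e z := by simp [g]; ring
    by_cases hz : e z = 0
    · simp [hgz, hz, hε.le]
    · rw [hgz, norm_mul, ← mul_one ε]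
      exact mul_le_mul (hsupp hz).le (he.norm_le_one z) (norm_nonneg _) hε.le
  have hφg : φ f - c * f x = φ g := by
    rw [hloc, map_sub, map_smul, hφ e he, smul_eq_mul, mul_comm c]
  calc dist (φ f) (c * f x) = ‖φ g‖ := by rw [dist_eq_norm, hφg]
    _ ≤ ‖φ‖ * ‖g‖ := φ.le_opNorm g
    _ ≤ (‖φ‖ + 1) * ε := by gcongr; linarith
    _ = δ := by simp only [ε]; field_simp

end Functional

theorem norm_eq_one_and_eq_of_norm_add_eq_two {E : Type*} [NormedAddCommGroup E]
    [NormedSpace ℝ E] [StrictConvexSpace ℝ E] {a b : E} (ha : ‖a‖ ≤ 1) (hb : ‖b‖ ≤ 1)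
    (hab : ‖a + b‖ = 2) : ‖a‖ = 1 ∧ a = b := by
  have := norm_add_le a b
  have ha₁ : ‖a‖ = 1 := by linarith
  have hb₁ : ‖b‖ = 1 := by linarith
  exact ⟨ha₁, eq_of_norm_eq_of_norm_add_eq (ha₁.trans hb₁.symm) (by linarith)⟩

section NormPreserving

variable {X Y : Type*} [TopologicalSpace X] [TopologicalSpace Y]
  (S : C₀(X, ℂ) →L[ℂ] C₀(Y, ℂ)) {x : X} {e e' : C₀(X, ℂ)}

theorem IsPeakFunction.norm_map_eq_one
    (hiso : ∀ f : C₀(X, ℂ), (∀ x, 0 ≤ f x) → ‖S f‖ = ‖f‖) (he : IsPeakFunction e x) :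
    ‖S e‖ = 1 :=
  (hiso e he.nonneg).trans he.norm_eq_one

theorem IsPeakFunction.norm_map_apply_le_one
    (hiso : ∀ f : C₀(X, ℂ), (∀ x, 0 ≤ f x) → ‖S f‖ = ‖f‖) (he : IsPeakFunction e x) (y : Y) :
    ‖S e y‖ ≤ 1 :=
  ((S e).norm_apply_le y).trans (he.norm_map_eq_one S hiso).le

theorem IsPeakFunction.map_apply_eq_of_norm_map_midpoint_apply_eq_one
    (hiso : ∀ f : C₀(X, ℂ), (∀ x, 0 ≤ f x) → ‖S f‖ = ‖f‖) (he : IsPeakFunction e x)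
    (he' : IsPeakFunction e' x) {y : Y} (hy : ‖S ((2⁻¹ : ℂ) • (e + e')) y‖ = 1) :
    ‖S e y‖ = 1 ∧ S e y = S e' y := by
  refine norm_eq_one_and_eq_of_norm_add_eq_two (he.norm_map_apply_le_one S hiso y)
    (he'.norm_map_apply_le_one S hiso y) ?_
  simp only [map_smul, map_add, coe_smul, coe_add, Pi.smul_apply, Pi.add_apply, smul_eq_mul,
    norm_mul, norm_inv, Complex.norm_ofNat] at hy
  linarith

variable [LocallyCompactSpace X] [RegularSpace X]

theorem exists_forall_norm_map_apply_eq_one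
    (hiso : ∀ f : C₀(X, ℂ), (∀ x, 0 ≤ f x) → ‖S f‖ = ‖f‖) (x : X) :
    ∃ y, ∀ e, IsPeakFunction e x → ‖S e y‖ = 1 := by
  have : Nonempty {e // IsPeakFunction e x} := nonempty_subtype.2 (exists_isPeakFunction x)
  have hpeak : ∀ e : {e // IsPeakFunction e x}, {y | ‖S e y‖ = 1} = {y | 1 ≤ ‖S e y‖} :=
    fun e => ext fun y => ⟨ge_of_eq, (e.2.norm_map_apply_le_one S hiso y).antisymm⟩
  obtain ⟨y, hy⟩ := IsCompact.nonempty_iInter_of_directed_nonempty_isCompact_isClosed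
    (fun e : {e // IsPeakFunction e x} => {y | ‖S e y‖ = 1})
    (fun e e' => ⟨⟨_, e.2.midpoint e'.2⟩,
      fun _ hy => (e.2.map_apply_eq_of_norm_map_midpoint_apply_eq_one S hiso e'.2 hy).1,
      fun _ hy => (e'.2.map_apply_eq_of_norm_map_midpoint_apply_eq_one S hiso e.2
        (by rwa [add_comm])).1⟩)
    (fun e => by
      have h₁ := e.2.norm_map_eq_one S hiso
      obtain ⟨y, hy⟩ := (S e).exists_norm_apply_eq fun h => by simp [h] at h₁
      exact ⟨y, hy.trans h₁⟩)
    (fun e => hpeak e ▸ (S e).isCompact_setOf_le_norm one_pos)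
    (fun e => isClosed_eq (S e).continuous.norm continuous_const)
  exact ⟨y, fun e he => mem_iInter.1 hy ⟨e, he⟩⟩

theorem exists_map_apply_eq_mul (hiso : ∀ f : C₀(X, ℂ), (∀ x, 0 ≤ f x) → ‖S f‖ = ‖f‖)
    (x : X) : ∃ (y : Y) (c : ℂ), ‖c‖ = 1 ∧ ∀ f : C₀(X, ℂ), S f y = c * f x := by
  obtain ⟨y, hy⟩ := exists_forall_norm_map_apply_eq_one S hiso x
  obtain ⟨e₀, he₀⟩ := exists_isPeakFunction x
  have hc : ∀ e, IsPeakFunction e x → (evalCLM ℂ y).comp S e = S e₀ y := fun e he =>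
    (he.map_apply_eq_of_norm_map_midpoint_apply_eq_one S hiso he₀ (hy _ (he.midpoint he₀))).2
  exact ⟨y, S e₀ y, hy e₀ he₀, apply_eq_mul_of_isPeakFunction _ hc⟩

end NormPreserving

theorem continuousOn_of_mapsTo_of_isInducing_domRestrict {X Y Z : Type*} [TopologicalSpace X]
    [TopologicalSpace Y] [TopologicalSpace Z] {f : X → Y} {g : Y → Z} {s : Set X} {t : Set Y}
    (hst : MapsTo f s t) (hg : IsInducing (t.domRestrict g)) (hgf : ContinuousOn (g ∘ f) s) :
    ContinuousOn f s := by
  rw [continuousOn_iff_continuous_domRestrict] at hgf ⊢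
  exact continuous_subtype_val.comp (hg.continuous_iff.2 hgf : Continuous (hst.restrict f s t))

section WeightedComposition

variable {X Y : Type*} [TopologicalSpace X] [LocallyCompactSpace X] [RegularSpace X]
  [TopologicalSpace Y] (S : C₀(X, ℂ) →L[ℂ] C₀(Y, ℂ)) {ψ : X → Y}

theorem isInducing_norm_apply : IsInducing fun (x : X) (f : C₀(X, ℂ)) => ‖f x‖ := by
  refine isInducing_iff_nhds.2 fun x =>
    le_antisymm (tendsto_iff_comap.1 ((continuous_pi fun f => f.continuous.norm).tendsto x))
      fun U hU => ?_
  obtain ⟨V, hVU, hVo, hxV⟩ := mem_nhds_iff.1 hU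
  obtain ⟨e, he, hsupp, -⟩ := exists_isPeakFunction_support_subset x hVo hxV
  refine mem_comap.2 ⟨{F | 2⁻¹ < F e}, (isOpen_lt continuous_const (continuous_apply e)).mem_nhds
    (by norm_num [he.apply_eq_one]), fun z hz => hVU (hsupp fun hez => ?_)⟩
  norm_num [mem_preimage, hez] at hz

theorem continuous_of_norm_map_apply_eq
    (hsep : ∀ y₁ y₂ : Y, y₁ ≠ y₂ → ∃ f : C₀(X, ℂ), ‖S f y₁‖ ≠ ‖S f y₂‖)
    (hψ : ∀ f x, ‖S f (ψ x)‖ = ‖f x‖) : Continuous ψ := by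
  set Φ : Y → C₀(X, ℂ) → ℝ := fun y f => ‖S f y‖
  have hΦ : Continuous Φ := continuous_pi fun f => (S f).continuous.norm
  have hΦinj : Function.Injective Φ := fun y₁ y₂ h => by
    by_contra hne
    obtain ⟨f, hf⟩ := hsep y₁ y₂ hne
    exact hf (congrFun h f)
  have hΦψ : Φ ∘ ψ = fun x f => ‖f x‖ := funext fun x => funext fun f => hψ f x
  refine continuous_iff_continuousAt.2 fun x₀ => ?_
  obtain ⟨e, he⟩ := exists_isPeakFunction x₀
  set K := {y | 2⁻¹ ≤ ‖S e y‖}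
  have : CompactSpace K :=
    isCompact_iff_compactSpace.1 ((S e).isCompact_setOf_le_norm (by norm_num))
  have hΦK : IsInducing (K.domRestrict Φ) :=
    ((hΦ.comp continuous_subtype_val).isClosedEmbedding
      (hΦinj.comp Subtype.val_injective)).isInducing
  have hU : IsOpen {x | 2⁻¹ < ‖e x‖} := isOpen_lt continuous_const e.continuous.norm
  refine (continuousOn_of_mapsTo_of_isInducing_domRestrict (fun x hx => ?_) hΦK ?_).continuousAt
    (hU.mem_nhds (by norm_num [he.apply_eq_one]))
  · show 2⁻¹ ≤ ‖S e (ψ x)‖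
    exact (hψ e x).symm ▸ le_of_lt hx
  · exact hΦψ ▸ (continuous_pi fun f => f.continuous.norm).continuousOn

theorem isEmbedding_of_norm_map_apply_eq [T2Space X]
    (hsep : ∀ y₁ y₂ : Y, y₁ ≠ y₂ → ∃ f : C₀(X, ℂ), ‖S f y₁‖ ≠ ‖S f y₂‖)
    (hψ : ∀ f x, ‖S f (ψ x)‖ = ‖f x‖) : IsEmbedding ψ := by
  have hψc := continuous_of_norm_map_apply_eq S hsep hψ
  have hind : IsInducing ψ :=
    .of_comp hψc (g := fun y f => ‖S f y‖) (continuous_pi fun f => (S f).continuous.norm)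
      (by simpa only [Function.comp_def, hψ] using isInducing_norm_apply)
  exact ⟨hind, hind.injective⟩

theorem continuous_of_map_apply_eq_mul (hψc : Continuous ψ) {k : X → ℂ}
    (hk : ∀ f x, S f (ψ x) = k x * f x) : Continuous k := by
  refine continuous_iff_continuousAt.2 fun x₀ => ?_
  obtain ⟨e, he⟩ := exists_isPeakFunction x₀
  have hne : e x₀ ≠ 0 := by simp [he.apply_eq_one]
  refine (((S e).continuous.comp hψc).continuousAt.div e.continuous.continuousAt hne).congr ?_
  filter_upwards [e.continuous.continuousAt.eventually_ne hne] with x hx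
  show S e (ψ x) / e x = k x
  exact (hk e x).symm ▸ mul_div_cancel_right₀ _ hx

end WeightedComposition

theorem stmt_17_general {X Y : Type*} [TopologicalSpace X] [LocallyCompactSpace X] [T2Space X]
    [TopologicalSpace Y]
    (S : C₀(X, ℂ) →L[ℂ] C₀(Y, ℂ))
    (hiso : ∀ f : C₀(X, ℂ), (∀ x, 0 ≤ f x) → ‖S f‖ = ‖f‖)
    (hsep : ∀ y₁ y₂ : Y, y₁ ≠ y₂ → ∃ f : C₀(X, ℂ), ‖S f y₁‖ ≠ ‖S f y₂‖) :
    ∃ (ψ : X → Y) (k : X → ℂ),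
      Topology.IsEmbedding ψ ∧ Continuous k ∧ (∀ x, ‖k x‖ = 1) ∧
      ∀ (f : C₀(X, ℂ)) (x : X), S f (ψ x) = k x * f x := by
  choose ψ k hk hSψ using exists_map_apply_eq_mul S hiso
  have hSψ' : ∀ f x, S f (ψ x) = k x * f x := fun f x => hSψ x f
  have hψ : ∀ f x, ‖S f (ψ x)‖ = ‖f x‖ := fun f x => by rw [hSψ', norm_mul, hk, one_mul]
  have hemb := isEmbedding_of_norm_map_apply_eq S hsep hψ
  exact ⟨ψ, k, hemb, continuous_of_map_apply_eq_mul S hemb.continuous hSψ', hk, hSψ'⟩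

/-- a bounded linear `S : C₀(X) → C₀(Y)` preserving norms of positive
functions, whose range strongly separates points of `Y`, is a weighted composition
operator `Sf(ψ(x)) = k(x)f(x)` for a homeomorphic embedding `ψ : X → Y` and a continuous
unimodular `k`. -/
theorem stmt_17 {X Y : Type*} [TopologicalSpace X] [LocallyCompactSpace X] [T2Space X]
    [TopologicalSpace Y] [LocallyCompactSpace Y] [T2Space Y]
    (S : C₀(X, ℂ) →L[ℂ] C₀(Y, ℂ))
    (hiso : ∀ f : C₀(X, ℂ), (∀ x, 0 ≤ f x) → ‖S f‖ = ‖f‖)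
    (hsep : ∀ y₁ y₂ : Y, y₁ ≠ y₂ → ∃ f : C₀(X, ℂ), ‖S f y₁‖ ≠ ‖S f y₂‖) :
    ∃ (ψ : X → Y) (k : X → ℂ),
      Topology.IsEmbedding ψ ∧ Continuous k ∧ (∀ x, ‖k x‖ = 1) ∧
      ∀ (f : C₀(X, ℂ)) (x : X), S f (ψ x) = k x * f x :=
  stmt_17_general S hiso hsep
end
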